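/- arXiv:2310.02562 — 5 statements merged into one kernel-verified Lean document; each statement's English description precedes it below -/
import Mathlib

section
/- For $p > 0$, $A, C > 0$ and fixed points $A_0, C_0 > 0$, the function $\log_2(1 + \frac{p}{AC})$ is bounded below by $\log_2(1 + \frac{p}{A_0 C_0}) - \frac{p \log_2 e \,(A - A_0)}{p A_0 + A_0^2 C_0} - \frac{p \log_2 e \,(C - C_0)}{p C_0 + C_0^2 A_0}$. -/
/-! In the variable `t = log (A C)` the map `t ↦ log (1 + p e^{-t})` is convex, so it lies above its
tangent at `t₀ = log (A₀ C₀)`, of slope `-p / (A₀ C₀ + p)`; after exponentiating, this tangent bound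
is the weighted AM-GM inequality. As the slope is negative, replacing `log A - log A₀` and
`log C - log C₀` by the larger `(A - A₀) / A₀` and `(C - C₀) / C₀` only lowers the bound. -/

open Real

lemma one_add_div_mul_rpow_le {p x x₀ : ℝ} (hp : 0 ≤ p) (hx : 0 < x) (hx₀ : 0 < x₀) :
    (1 + p / x₀) * (x₀ / x) ^ (p / (x₀ + p)) ≤ 1 + p / x := by
  set w := p / (x₀ + p) with hw
  have hw₀ : 0 ≤ w := by positivity
  have hw₁ : 0 ≤ 1 - w := by
    rw [sub_nonneg, hw, div_le_one (by positivity)]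
    linarith
  have amgm := geom_mean_le_arith_mean2_weighted hw₀ hw₁ (div_pos hx₀ hx).le zero_le_one
    (add_sub_cancel w 1)
  rw [one_rpow, mul_one, mul_one] at amgm
  calc (1 + p / x₀) * (x₀ / x) ^ w ≤ (1 + p / x₀) * (w * (x₀ / x) + (1 - w)) := by gcongr
    _ = 1 + p / x := by rw [hw]; field_simp; ring

lemma log_one_add_div_sub_le {p x x₀ : ℝ} (hp : 0 ≤ p) (hx : 0 < x) (hx₀ : 0 < x₀) :
    log (1 + p / x₀) - p / (x₀ + p) * (log x - log x₀) ≤ log (1 + p / x) := by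
  have h := log_le_log (by positivity) (one_add_div_mul_rpow_le hp hx hx₀)
  rw [log_mul (by positivity) (by positivity), log_rpow (div_pos hx₀ hx),
    log_div hx₀.ne' hx.ne'] at h
  linarith

lemma log_sub_log_le_sub_div {x x₀ : ℝ} (hx : 0 < x) (hx₀ : 0 < x₀) :
    log x - log x₀ ≤ (x - x₀) / x₀ := by
  have h := log_le_sub_one_of_pos (div_pos hx hx₀)
  rwa [log_div hx.ne' hx₀.ne', div_sub_one hx₀.ne'] at h

lemma log_one_add_div_mul_ge {p A C A₀ C₀ : ℝ} (hp : 0 ≤ p) (hA : 0 < A) (hC : 0 < C)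
    (hA₀ : 0 < A₀) (hC₀ : 0 < C₀) :
    log (1 + p / (A₀ * C₀)) - p / (A₀ * C₀ + p) * ((A - A₀) / A₀ + (C - C₀) / C₀)
      ≤ log (1 + p / (A * C)) := by
  have tangent := log_one_add_div_sub_le hp (mul_pos hA hC) (mul_pos hA₀ hC₀)
  have linearize : log (A * C) - log (A₀ * C₀) ≤ (A - A₀) / A₀ + (C - C₀) / C₀ := by
    rw [log_mul hA.ne' hC.ne', log_mul hA₀.ne' hC₀.ne']
    linarith [log_sub_log_le_sub_div hA hA₀, log_sub_log_le_sub_div hC hC₀]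
  have hw : 0 ≤ p / (A₀ * C₀ + p) := by positivity
  linarith [mul_le_mul_of_nonneg_left linearize hw]

theorem sca_lower_bound_rate (p A C A0 C0 : ℝ)
    (hp : 0 < p) (hA : 0 < A) (hC : 0 < C) (hA0 : 0 < A0) (hC0 : 0 < C0) :
    Real.logb 2 (1 + p / (A0 * C0))
      - p * Real.logb 2 (Real.exp 1) * (A - A0) / (p * A0 + A0 ^ 2 * C0)
      - p * Real.logb 2 (Real.exp 1) * (C - C0) / (p * C0 + C0 ^ 2 * A0)
      ≤ Real.logb 2 (1 + p / (A * C)) := by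
  have hlog2 : 0 < log 2 := log_pos one_lt_two
  calc Real.logb 2 (1 + p / (A0 * C0))
        - p * Real.logb 2 (Real.exp 1) * (A - A0) / (p * A0 + A0 ^ 2 * C0)
        - p * Real.logb 2 (Real.exp 1) * (C - C0) / (p * C0 + C0 ^ 2 * A0)
      = (log (1 + p / (A0 * C0))
          - p / (A0 * C0 + p) * ((A - A0) / A0 + (C - C0) / C0)) / log 2 := by
        simp only [logb, log_exp]
        field_simp
        ring
    _ ≤ log (1 + p / (A * C)) / log 2 := by
        gcongr
        exact log_one_add_div_mul_ge hp.le hA hC hA0 hC0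
end

section
/- Consider $J$ users with channel gains $\gamma_1, \ldots, \gamma_J > 0$ and minimum SINR targets $r_1^{\min}, \ldots, r_J^{\min} > 0$. Define recursively $\bar{p}_j = r_j^{\min}(\sum_{i=j+1}^{J} \bar{p}_i + 1/\gamma_j)$ (with empty sum zero for $j = J$). Then $\sum_{j=1}^{J} \bar{p}_j = \sum_{j=1}^{J} \left(\prod_{i=1}^{j-1}(r_i^{\min} + 1)\right) \frac{r_j^{\min}}{\gamma_j}$, where the empty product equals 1. -/
theorem min_power_closed_form (J : ℕ) (hJ : 1 ≤ J) (γ r pbar : ℕ → ℝ)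
    (hγ : ∀ j ∈ Finset.Icc 1 J, 0 < γ j)
    (hr : ∀ j ∈ Finset.Icc 1 J, 0 < r j)
    (hrec : ∀ j ∈ Finset.Icc 1 J,
      pbar j = r j * (∑ i ∈ Finset.Icc (j + 1) J, pbar i + 1 / γ j)) :
    ∑ j ∈ Finset.Icc 1 J, pbar j
      = ∑ j ∈ Finset.Icc 1 J,
          (∏ i ∈ Finset.Icc 1 (j - 1), (r i + 1)) * (r j / γ j) := by
  have aux : ∀ n a, a + n = J + 1 → 1 ≤ a →
      ∑ j ∈ Finset.Icc a J, pbar j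
        = ∑ j ∈ Finset.Icc a J,
            (∏ i ∈ Finset.Icc a (j - 1), (r i + 1)) * (r j / γ j) := by
    intro n
    induction n with
    | zero =>
      intro a ha _
      have : Finset.Icc a J = ∅ := by
        apply Finset.Icc_eq_empty
        omega
      simp [this]
    | succ n ih =>
      intro a ha ha1
      have haJ : a ≤ J := by omega
      have hins : Finset.Icc a J = insert a (Finset.Icc (a + 1) J) := by
        rw [Finset.Icc_add_one_left_eq_Ioc, Finset.Ioc_insert_left haJ]
      have hnot : a ∉ Finset.Icc (a + 1) J := by simp
      have IH := ih (a + 1) (by omega) (by omega)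
      have haMem : a ∈ Finset.Icc 1 J := Finset.mem_Icc.mpr ⟨ha1, haJ⟩
      have hγa : γ a ≠ 0 := ne_of_gt (hγ a haMem)
      have hrecA := hrec a haMem
      rw [hins, Finset.sum_insert hnot, Finset.sum_insert hnot, hrecA, IH]
      have hprod_a : Finset.Icc a (a - 1) = ∅ := by
        apply Finset.Icc_eq_empty; omega
      rw [hprod_a, Finset.prod_empty, one_mul]
      have hprod : ∀ j ∈ Finset.Icc (a + 1) J,
          (∏ i ∈ Finset.Icc a (j - 1), (r i + 1)) * (r j / γ j)
            = (r a + 1) * ((∏ i ∈ Finset.Icc (a + 1) (j - 1), (r i + 1)) * (r j / γ j)) := by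
        intro j hj
        have hj' : a + 1 ≤ j := (Finset.mem_Icc.mp hj).1
        have : Finset.Icc a (j - 1) = insert a (Finset.Icc (a + 1) (j - 1)) := by
          rw [Finset.Icc_add_one_left_eq_Ioc, Finset.Ioc_insert_left (by omega)]
        rw [this, Finset.prod_insert (by simp)]
        ring
      rw [Finset.sum_congr rfl hprod, ← Finset.mul_sum]
      field_simp
      ring
  have := aux (J + 1 - 1) 1 (by omega) le_rfl
  exact this
end

section
/- Let $\gamma_j > 0$, $r_j^{\min} > 0$ for $j = 1, \ldots, J$, and let $p_j = \bar{p}_j + \Delta p_j$ where $\bar{p}_j$ is the recursive minimal QoS allocation. Then the rate of user $j$ decomposes as $\log_2\left(1 + \frac{\gamma_j p_j}{\gamma_j \sum_{i>j} p_i + 1}\right) = \log_2(1 + r_j^{\min}) + \log_2\left(1 + \frac{\Delta p_j - r_j^{\min}\sum_{i>j}\Delta p_i}{\sum_{i \ge j}\bar{p}_i + (1 + r_j^{\min})\sum_{i>j}\Delta p_i + 1/\gamma_j}\right)$. -/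
theorem rate_decomposition (J j : ℕ) (hj : j ∈ Finset.Icc 1 J)
    (γ r pbar Δp : ℕ → ℝ)
    (hγ : ∀ i ∈ Finset.Icc 1 J, 0 < γ i)
    (hr : ∀ i ∈ Finset.Icc 1 J, 0 < r i)
    (hΔ : ∀ i ∈ Finset.Icc 1 J, 0 ≤ Δp i)
    (hrec : ∀ i ∈ Finset.Icc 1 J,
      pbar i = r i * (∑ l ∈ Finset.Icc (i + 1) J, pbar l + 1 / γ i)) :
    Real.logb 2 (1 + γ j * (pbar j + Δp j)
        / (γ j * ∑ i ∈ Finset.Icc (j + 1) J, (pbar i + Δp i) + 1))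
      = Real.logb 2 (1 + r j)
        + Real.logb 2 (1 + (Δp j - r j * ∑ i ∈ Finset.Icc (j + 1) J, Δp i)
            / (∑ i ∈ Finset.Icc j J, pbar i
                + (1 + r j) * ∑ i ∈ Finset.Icc (j + 1) J, Δp i + 1 / γ j)) := by
  obtain ⟨hj1, hjJ⟩ := Finset.mem_Icc.mp hj
  have hγj := hγ j hj
  have hrj := hr j hj
  have hΔj := hΔ j hj
  have hpbar_pos : ∀ i ∈ Finset.Icc 1 J, 0 < pbar i := by
    have key : ∀ k, ∀ i, J - i < k → i ∈ Finset.Icc 1 J → 0 < pbar i := by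
      intro k
      induction k with
      | zero => omega
      | succ k ih =>
        intro i hik hi
        rw [hrec i hi]
        obtain ⟨h1, h2⟩ := Finset.mem_Icc.mp hi
        have hsum : 0 ≤ ∑ l ∈ Finset.Icc (i+1) J, pbar l := by
          apply Finset.sum_nonneg
          intro l hl
          obtain ⟨hl1, hl2⟩ := Finset.mem_Icc.mp hl
          exact le_of_lt (ih l (by omega) (Finset.mem_Icc.mpr ⟨by omega, hl2⟩))
        have hγi := hγ i hi
        have hri := hr i hi
        positivity
    intro i hi
    obtain ⟨h1, h2⟩ := Finset.mem_Icc.mp hi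
    exact key (J - i + 1) i (by omega) hi
  have hpj : 0 < pbar j := hpbar_pos j hj
  set S := ∑ i ∈ Finset.Icc (j+1) J, pbar i with hS
  set T := ∑ i ∈ Finset.Icc (j+1) J, Δp i with hT
  have hSnn : 0 ≤ S := Finset.sum_nonneg fun l hl => by
    obtain ⟨hl1, hl2⟩ := Finset.mem_Icc.mp hl
    exact le_of_lt (hpbar_pos l (Finset.mem_Icc.mpr ⟨by omega, hl2⟩))
  have hTnn : 0 ≤ T := Finset.sum_nonneg fun l hl => by
    obtain ⟨hl1, hl2⟩ := Finset.mem_Icc.mp hl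
    exact hΔ l (Finset.mem_Icc.mpr ⟨by omega, hl2⟩)
  have hsum_split : ∑ i ∈ Finset.Icc j J, pbar i = pbar j + S := by
    have hins : Finset.Icc j J = insert j (Finset.Icc (j+1) J) := by
      ext x; simp only [Finset.mem_Icc, Finset.mem_insert]; omega
    rw [hins, Finset.sum_insert (by simp [Finset.mem_Icc])]
  have hsum_add : ∑ i ∈ Finset.Icc (j+1) J, (pbar i + Δp i) = S + T := by
    rw [hS, hT, ← Finset.sum_add_distrib]
  have hpbarj : pbar j = r j * (S + 1 / γ j) := hrec j hj
  rw [hsum_split, hsum_add]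
  have hγne : γ j ≠ 0 := ne_of_gt hγj
  have h1r : (1 : ℝ) + r j ≠ 0 := by positivity
  have hBpos : 0 < S + T + 1 / γ j := by positivity
  have hDpos : 0 < γ j * (S + T) + 1 := by positivity
  have hYpos : 0 < pbar j + S + (1 + r j) * T + 1 / γ j := by
    have h1 : 0 < 1 / γ j := by positivity
    have h2 : 0 ≤ (1 + r j) * T := by positivity
    linarith
  have harg : 1 + γ j * (pbar j + Δp j) / (γ j * (S + T) + 1)
      = (1 + r j) * (1 + (Δp j - r j * T)
          / (pbar j + S + (1 + r j) * T + 1 / γ j)) := by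
    rw [hpbarj]
    field_simp
    ring
  have hXpos : 0 < 1 + (Δp j - r j * T) / (pbar j + S + (1 + r j) * T + 1 / γ j) := by
    have hX : 1 + (Δp j - r j * T) / (pbar j + S + (1 + r j) * T + 1 / γ j)
        = (pbar j + Δp j + (S + T + 1 / γ j))
          / (pbar j + S + (1 + r j) * T + 1 / γ j) := by
      rw [hpbarj]
      field_simp
      ring
    rw [hX]
    have h2 : 0 < pbar j + Δp j + (S + T + 1 / γ j) := by linarith
    positivity
  rw [harg, Real.logb_mul (by positivity) (ne_of_gt hXpos)]
end

section
/- Let $\hat{p}_1 \ge \hat{p}_2 \ge \cdots \ge \hat{p}_J > 0$ be fixed and consider maximizing $\sum_{j=1}^J \log_2\left(1 + \frac{\Delta\hat{p}_j}{\hat{p}_j + \sum_{i=j+1}^J \Delta\hat{p}_i}\right)$ over nonnegative $\Delta\hat{p}_1, \ldots, \Delta\hat{p}_J$ subject to $\sum_{j=1}^J \Delta\hat{p}_j = S$ for fixed $S > 0$. Then the maximum is attained by allocating all excess power to the last user: $\Delta\hat{p}_J = S$ and $\Delta\hat{p}_j = 0$ for $j < J$, giving optimal value $\log_2(1 + S/\hat{p}_J)$.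 -/
theorem excess_power_to_last_user (J : ℕ) (hJ : 1 ≤ J) (phat : ℕ → ℝ) (S : ℝ)
    (hS : 0 < S)
    (hpos : ∀ j ∈ Finset.Icc 1 J, 0 < phat j)
    (hmono : ∀ j ∈ Finset.Icc 1 (J - 1), phat (j + 1) ≤ phat j) :
    (∀ Δ : ℕ → ℝ, (∀ j ∈ Finset.Icc 1 J, 0 ≤ Δ j) →
      ∑ j ∈ Finset.Icc 1 J, Δ j = S →
      ∑ j ∈ Finset.Icc 1 J,
          Real.logb 2 (1 + Δ j / (phat j + ∑ i ∈ Finset.Icc (j + 1) J, Δ i))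
        ≤ Real.logb 2 (1 + S / phat J)) ∧
    ∑ j ∈ Finset.Icc 1 J,
        Real.logb 2 (1 + (if j = J then S else 0)
          / (phat j + ∑ i ∈ Finset.Icc (j + 1) J, (if i = J then S else 0)))
      = Real.logb 2 (1 + S / phat J) := by
  have hJmem : J ∈ Finset.Icc 1 J := Finset.mem_Icc.2 ⟨hJ, le_rfl⟩
  have hpJ : 0 < phat J := hpos J hJmem
  have hb2 : (1:ℝ) < 2 := one_lt_two
  -- phat J ≤ phat j for all j in the range
  have hle : ∀ j, 1 ≤ j → j ≤ J → phat J ≤ phat j := by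
    intro j hj1 hjJ
    have key : ∀ k, j ≤ k → k ≤ J → phat k ≤ phat j := by
      intro k hk
      induction k, hk using Nat.le_induction with
      | base => intro _; exact le_rfl
      | succ k hk ih =>
        intro hk1
        refine le_trans (hmono k ?_) (ih (Nat.le_of_succ_le hk1))
        exact Finset.mem_Icc.2 ⟨le_trans hj1 hk, Nat.le_sub_of_add_le hk1⟩
    exact key J hjJ le_rfl
  constructor
  · intro Δ hΔ hsum
    set T : ℕ → ℝ := fun j => ∑ i ∈ Finset.Icc (j+1) J, Δ i with hT
    have hT0 : T 0 = S := hsum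
    have hTJ : T J = 0 := by
      have : Finset.Icc (J+1) J = ∅ := Finset.Icc_eq_empty (by omega)
      simp [hT, this]
    have hTnonneg : ∀ j, 0 ≤ T j := by
      intro j
      refine Finset.sum_nonneg fun i hi => hΔ i ?_
      rw [Finset.mem_Icc] at hi ⊢; omega
    have hstep : ∀ j, 1 ≤ j → j ≤ J → T (j-1) = Δ j + T j := by
      intro j hj1 hjJ
      have h1 : j - 1 + 1 = j := Nat.succ_pred_eq_of_pos hj1
      have h2 : T (j-1) = ∑ i ∈ Finset.Icc j J, Δ i := by rw [hT]; simp [h1]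
      rw [h2, Finset.Icc_eq_cons_Ioc hjJ, Finset.sum_cons, ← Finset.Icc_add_one_left_eq_Ioc]
    set f : ℕ → ℝ := fun j => Real.logb 2 (phat J + T j) with hf
    have hbound : ∀ j ∈ Finset.Icc 1 J,
        Real.logb 2 (1 + Δ j / (phat j + ∑ i ∈ Finset.Icc (j + 1) J, Δ i))
          ≤ f (j-1) - f j := by
      intro j hj
      rw [Finset.mem_Icc] at hj
      obtain ⟨hj1, hjJ⟩ := hj
      have hpj : 0 < phat j := hpos j (Finset.mem_Icc.2 ⟨hj1, hjJ⟩)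
      have hΔj : 0 ≤ Δ j := hΔ j (Finset.mem_Icc.2 ⟨hj1, hjJ⟩)
      have hTj := hTnonneg j
      have hTj1 : T (j-1) = Δ j + T j := hstep j hj1 hjJ
      have hden : 0 < phat j + T j := by linarith
      have hdenJ : 0 < phat J + T j := by linarith
      have hnumJ : 0 < phat J + T (j-1) := by rw [hTj1]; linarith
      have hpJj : phat J ≤ phat j := hle j hj1 hjJ
      have heq : 1 + Δ j / (phat j + T j) = (phat j + T (j-1)) / (phat j + T j) := by
        rw [hTj1]; field_simp; ring
      have hlhs_pos : 0 < (phat j + T (j-1)) / (phat j + T j) := by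
        apply div_pos; · rw [hTj1]; linarith
        · exact hden
      have hratio : (phat j + T (j-1)) / (phat j + T j)
          ≤ (phat J + T (j-1)) / (phat J + T j) := by
        rw [div_le_div_iff₀ hden hdenJ, hTj1]
        nlinarith
      calc Real.logb 2 (1 + Δ j / (phat j + T j))
          = Real.logb 2 ((phat j + T (j-1)) / (phat j + T j)) := by rw [heq]
        _ ≤ Real.logb 2 ((phat J + T (j-1)) / (phat J + T j)) :=
            Real.logb_le_logb_of_le hb2 hlhs_pos hratio
        _ = f (j-1) - f j := by
            rw [hf]; exact Real.logb_div (ne_of_gt hnumJ) (ne_of_gt hdenJ)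
    calc ∑ j ∈ Finset.Icc 1 J,
            Real.logb 2 (1 + Δ j / (phat j + ∑ i ∈ Finset.Icc (j + 1) J, Δ i))
        ≤ ∑ j ∈ Finset.Icc 1 J, (f (j-1) - f j) := Finset.sum_le_sum hbound
      _ = ∑ i ∈ Finset.range J, (f i - f (i+1)) := by
          rw [show Finset.Icc 1 J = Finset.Ico 1 (J+1) by rw [Finset.Ico_add_one_right_eq_Icc]]
          rw [Finset.sum_Ico_eq_sum_range]
          simp [Nat.add_sub_cancel_left]
          exact Finset.sum_congr rfl fun i _ => by simp [Nat.add_sub_cancel, add_comm 1 i]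
      _ = f 0 - f J := Finset.sum_range_sub' f J
      _ = Real.logb 2 (1 + S / phat J) := by
          rw [hf]
          simp only [hT0, hTJ, add_zero]
          rw [← Real.logb_div (by positivity) (ne_of_gt hpJ)]
          congr 1
          field_simp
  · rw [Finset.sum_eq_single_of_mem J hJmem]
    · have hempty : Finset.Icc (J+1) J = ∅ := Finset.Icc_eq_empty (by omega)
      simp [hempty]
    · intro j _ hne
      simp [hne]
end

section
/- Let $\gamma_j > 0$ and $r_j^{\min} > 0$, and define $\hat{p}_j = (\sum_{i=j}^J \bar{p}_i + 1/\gamma_j)\prod_{i=1}^{j-1}(1 + r_i^{\min})$ where $\bar{p}_j = r_j^{\min}(\sum_{i>j}\bar{p}_i + 1/\gamma_j)$. If the channel gains are ordered increasingly, $\gamma_1 \le \gamma_2 \le \cdots \le \gamma_J$, then the sequence $\hat{p}_j$ is non-increasing: $\hat{p}_j \ge \hat{p}_{j+1}$ for all $j = 1, \ldots, J-1$. -/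
theorem phat_nonincreasing (J : ℕ) (γ r pbar phat : ℕ → ℝ)
    (hγpos : ∀ j ∈ Finset.Icc 1 J, 0 < γ j)
    (hγmono : ∀ j ∈ Finset.Icc 1 (J - 1), γ j ≤ γ (j + 1))
    (hr : ∀ j ∈ Finset.Icc 1 J, 0 < r j)
    (hrec : ∀ j ∈ Finset.Icc 1 J,
      pbar j = r j * (∑ i ∈ Finset.Icc (j + 1) J, pbar i + 1 / γ j))
    (hphat : ∀ j ∈ Finset.Icc 1 J,
      phat j = (∑ i ∈ Finset.Icc j J, pbar i + 1 / γ j)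
        * ∏ i ∈ Finset.Icc 1 (j - 1), (1 + r i)) :
    ∀ j ∈ Finset.Icc 1 (J - 1), phat (j + 1) ≤ phat j := by
  intro j hj
  rw [Finset.mem_Icc] at hj
  obtain ⟨hj1, hj2⟩ := hj
  obtain ⟨k, rfl⟩ : ∃ k, j = k + 1 := ⟨j - 1, by omega⟩
  have hjJ : k + 1 ≤ J := by omega
  have hj1J : k + 2 ≤ J := by omega
  have hmemj : k + 1 ∈ Finset.Icc 1 J := Finset.mem_Icc.mpr ⟨by omega, hjJ⟩
  have hmemj1 : k + 2 ∈ Finset.Icc 1 J := Finset.mem_Icc.mpr ⟨by omega, hj1J⟩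
  have hA : ∑ i ∈ Finset.Icc (k + 1) J, pbar i
      = pbar (k + 1) + ∑ i ∈ Finset.Icc (k + 2) J, pbar i := by
    rw [← Finset.Ioc_insert_left hjJ, Finset.sum_insert (by simp)]
    congr 1
    rw [← Finset.Icc_add_one_left_eq_Ioc]; rfl
  have hP : ∏ i ∈ Finset.Icc 1 (k + 2 - 1), (1 + r i)
      = (∏ i ∈ Finset.Icc 1 (k + 1 - 1), (1 + r i)) * (1 + r (k + 1)) := by
    have h : k + 2 - 1 = k + 1 := by omega
    have h2 : k + 1 - 1 = k := by omega
    rw [h, h2, Finset.prod_Icc_succ_top (by omega)]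
  set A := ∑ i ∈ Finset.Icc (k + 2) J, pbar i with hAdef
  set P := ∏ i ∈ Finset.Icc 1 (k + 1 - 1), (1 + r i) with hPdef
  have hPpos : 0 < P := Finset.prod_pos (fun i hi => by
    have hi' := Finset.mem_Icc.mp hi
    have : 0 < r i := hr i (Finset.mem_Icc.mpr ⟨hi'.1, by omega⟩)
    linarith)
  have hrj : 0 < r (k + 1) := hr (k + 1) hmemj
  have hγj : 0 < γ (k + 1) := hγpos (k + 1) hmemj
  have hγj1 : 0 < γ (k + 2) := hγpos (k + 2) hmemj1
  have hmono : γ (k + 1) ≤ γ (k + 1 + 1) :=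
    hγmono (k + 1) (Finset.mem_Icc.mpr ⟨hj1, hj2⟩)
  have hinv : 1 / γ (k + 2) ≤ 1 / γ (k + 1) := by
    have : γ (k + 1) ≤ γ (k + 2) := by
      convert hmono using 2
    exact one_div_le_one_div_of_le hγj this
  have e1 : phat (k + 1) = (1 + r (k + 1)) * (A + 1 / γ (k + 1)) * P := by
    rw [hphat (k + 1) hmemj, hA, hrec (k + 1) hmemj]
    ring
  have e2 : phat (k + 1 + 1) = (1 + r (k + 1)) * (A + 1 / γ (k + 2)) * P := by
    have : k + 1 + 1 = k + 2 := rfl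
    rw [this, hphat (k + 2) hmemj1, hP]
    ring
  rw [e1, e2]
  have h1r : 0 < 1 + r (k + 1) := by linarith
  nlinarith [mul_pos h1r hPpos]
end
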